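/- arXiv:q-alg/9707004 — 3 statements merged into one kernel-verified Lean document; each statement's English description precedes it below -/
import Mathlib

section
/- Let n ≥ 1 and fix an indeterminate q. Then for all integers j ≥ 0, all b ∈ B and all μ = (μ_0,…,μ_n) ∈ ℤ^{n+1}, the unrestricted one-dimensional sum of the level-1 perfect crystal of type A_n^{(1)} satisfies the closed formula g_j(b,μ) = q^{(1/2)·Σ_{k∈B} μ_k(μ_k−1) + Σ_{k∈B} H(b,k)·μ_k} · [j; μ]_q. -/
open Finset

noncomputable section

/-- The indeterminate `q`, living in the field of rational functions `ℚ(q)`. -/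
def q : RatFunc ℚ := RatFunc.X

/-- The energy function of the level-1 perfect crystal `B = {0,…,n}` of type `A_n^{(1)}`:
`H(b,b') = 1` if `b ≥ b'` and `0` if `b < b'`. -/
def H (n : ℕ) (b b' : Fin (n + 1)) : ℤ := if b' ≤ b then 1 else 0

/-- The unrestricted one-dimensional sum `g_j(b,μ)`: the sum of
`q^{Σ_{i=1}^j i·H(b_{i+1},b_i)}` over all sequences `(b_1,…,b_j) ∈ B^j` (encoded as
`p : Fin (j+1) → B` with `p (i-1) = b_i` and `p j = b_{j+1} = b`) such that for every
`k ∈ B` the number of `i ∈ {1,…,j}` with `b_i = k` equals `μ_k`. -/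
def g (n j : ℕ) (b : Fin (n + 1)) (μ : Fin (n + 1) → ℤ) : RatFunc ℚ :=
  ∑ p ∈ Finset.univ.filter (fun p : Fin (j + 1) → Fin (n + 1) =>
      p (Fin.last j) = b ∧
      ∀ k, ((Finset.univ.filter (fun i : Fin j => p i.castSucc = k)).card : ℤ) = μ k),
    q ^ (∑ i : Fin j, ((i : ℤ) + 1) * H n (p i.succ) (p i.castSucc))

/-- `(q)_m = Π_{i=1}^m (1 - q^i)`. -/
def qfac (m : ℕ) : RatFunc ℚ := ∏ i ∈ Finset.range m, (1 - q ^ (i + 1))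

/-- The Gaussian multinomial `[j; μ]_q`, defined to be `(q)_j / Π_k (q)_{μ_k}` when all
`μ_k ≥ 0` and `Σ_k μ_k = j`, and `0` otherwise. -/
def qmult (n j : ℕ) (μ : Fin (n + 1) → ℤ) : RatFunc ℚ :=
  if (∀ k, 0 ≤ μ k) ∧ (∑ k, μ k) = (j : ℤ) then qfac j / ∏ k, qfac (μ k).toNat else 0

/-! Splitting off the letter `b_j = c` next to the fixed end `b` gives the recursion
`g_{j+1}(b, μ) = Σ_c q^{(j+1) H(b,c)} g_j(c, μ - e_c)` (`e_c` the `c`-th unit vector), while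
the Gaussian multinomial satisfies `[j+1; μ] (1 - q^{μ_c}) = [j; μ - e_c] (1 - q^{j+1})`.
By induction on `j` the formula thus reduces to
`Σ_c q^{(j+1) H(b,c) + P_c} (1 - q^{μ_c}) = q^{P_{b+1}} (1 - q^{j+1})`, where
`P_c = μ_0 + ⋯ + μ_{c-1}` (so that `Σ_k H(c,k) μ_k = P_{c+1}`). This telescopes, because
`q^{P_c} (1 - q^{μ_c}) = q^{P_c} - q^{P_{c+1}}` and `P_{n+1} = j + 1`. -/

lemma q_ne_zero : q ≠ 0 := RatFunc.X_ne_zero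

lemma intDegree_q_zpow (m : ℤ) : (q ^ m).intDegree = m := by
  obtain ⟨k, rfl | rfl⟩ := m.eq_nat_or_neg
  · rw [zpow_natCast, q, ← RatFunc.algebraMap_X, ← map_pow, RatFunc.intDegree_polynomial,
      Polynomial.natDegree_X_pow]
  · rw [zpow_neg, RatFunc.intDegree_inv, zpow_natCast, q, ← RatFunc.algebraMap_X, ← map_pow,
      RatFunc.intDegree_polynomial, Polynomial.natDegree_X_pow]

lemma one_sub_q_zpow_ne_zero {m : ℤ} (hm : m ≠ 0) : 1 - q ^ m ≠ 0 := by
  rw [sub_ne_zero]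
  intro h
  exact hm (by simpa [← h] using (intDegree_q_zpow m).symm)

lemma qfac_ne_zero (m : ℕ) : qfac m ≠ 0 :=
  prod_ne_zero_iff.mpr fun i _ => by
    exact_mod_cast one_sub_q_zpow_ne_zero (m := i + 1) (by omega)

lemma qfac_toNat_of_pos {m : ℤ} (hm : 0 < m) :
    qfac m.toNat = qfac (m - 1).toNat * (1 - q ^ m) := by
  obtain ⟨k, rfl⟩ : ∃ k : ℕ, m = k + 1 := ⟨(m - 1).toNat, by omega⟩
  rw [add_sub_cancel_right, Int.toNat_natCast, show ((k : ℤ) + 1).toNat = k + 1 by omega, qfac,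
    prod_range_succ]
  norm_cast

lemma sum_sub_single {ι : Type*} [Fintype ι] [DecidableEq ι] (μ : ι → ℤ) (c : ι) :
    ∑ k, (μ - Pi.single c 1 : ι → ℤ) k = ∑ k, μ k - 1 := by
  simp [sum_sub_distrib]

lemma prod_qfac_toNat_sub_single {n : ℕ} {μ : Fin (n + 1) → ℤ} {c : Fin (n + 1)}
    (hc : 0 < μ c) :
    ∏ k, qfac (μ k).toNat =
      (∏ k, qfac ((μ - Pi.single c 1 : Fin (n + 1) → ℤ) k).toNat) * (1 - q ^ μ c) := by
  have herase : ∏ k ∈ univ.erase c, qfac ((μ - Pi.single c 1 : Fin (n + 1) → ℤ) k).toNat =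
      ∏ k ∈ univ.erase c, qfac (μ k).toNat :=
    prod_congr rfl fun k hk => by
      rw [Pi.sub_apply, Pi.single_eq_of_ne (ne_of_mem_erase hk), sub_zero]
  rw [← mul_prod_erase _ _ (mem_univ c), ← mul_prod_erase _ _ (mem_univ c), herase,
    qfac_toNat_of_pos hc, Pi.sub_apply, Pi.single_eq_same]
  ring

lemma qmult_succ_mul_one_sub (n j : ℕ) (μ : Fin (n + 1) → ℤ) (c : Fin (n + 1)) :
    qmult n (j + 1) μ * (1 - q ^ μ c) =
      qmult n j (μ - Pi.single c 1) * (1 - q ^ ((j : ℤ) + 1)) := by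
  have hsum := sum_sub_single μ c
  by_cases hμ : (∀ k, 0 ≤ μ k) ∧ ∑ k, μ k = ((j + 1 : ℕ) : ℤ)
  · obtain ⟨hμ0, hμs⟩ := hμ
    rcases (hμ0 c).eq_or_lt with hc | hc
    · rw [← hc, zpow_zero, sub_self, mul_zero, qmult, if_neg, zero_mul]
      exact fun h => by simpa [← hc] using h.1 c
    have hν : (∀ k, 0 ≤ (μ - Pi.single c 1 : Fin (n + 1) → ℤ) k) ∧
        ∑ k, (μ - Pi.single c 1 : Fin (n + 1) → ℤ) k = j := by
      refine ⟨fun k => ?_, by push_cast at hμs; omega⟩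
      rcases eq_or_ne k c with rfl | hk
      · simp; omega
      · simpa [hk] using hμ0 k
    have hprod : ∏ k, qfac ((μ - Pi.single c 1 : Fin (n + 1) → ℤ) k).toNat ≠ 0 :=
      prod_ne_zero_iff.mpr fun _ _ => qfac_ne_zero _
    have hc' : (1 : RatFunc ℚ) - q ^ μ c ≠ 0 := one_sub_q_zpow_ne_zero hc.ne'
    rw [qmult, if_pos ⟨hμ0, hμs⟩, qmult, if_pos hν, prod_qfac_toNat_sub_single hc, qfac,
      prod_range_succ, ← qfac]
    field_simp
    norm_cast
  · rw [qmult, if_neg hμ, zero_mul, qmult, if_neg, zero_mul]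
    rintro ⟨hν0, hνs⟩
    refine hμ ⟨fun k => ?_, by push_cast; omega⟩
    have := hν0 k
    rcases eq_or_ne k c with rfl | hk
    · simp at this; omega
    · simpa [hk] using this

lemma sum_mul_sub_one_sub_single_div_two {ι : Type*} [Fintype ι] [DecidableEq ι]
    (μ : ι → ℤ) (c : ι) :
    (∑ k, (μ - Pi.single c 1 : ι → ℤ) k * ((μ - Pi.single c 1 : ι → ℤ) k - 1)) / 2 =
      (∑ k, μ k * (μ k - 1)) / 2 - (μ c - 1) := by
  have hsum :
      ∑ k, (μ - Pi.single c 1 : ι → ℤ) k * ((μ - Pi.single c 1 : ι → ℤ) k - 1) =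
        ∑ k, μ k * (μ k - 1) + (-(μ c - 1)) * 2 := by
    rw [← Fintype.sum_ite_eq' c (fun k => (-(μ k - 1)) * 2), ← sum_add_distrib]
    refine sum_congr rfl fun k _ => ?_
    rcases eq_or_ne k c with rfl | hk
    · simp; ring
    · simp [hk]
  rw [hsum, Int.add_mul_ediv_right _ _ two_ne_zero]
  ring

lemma sum_H_mul_sub_single (n : ℕ) (μ : Fin (n + 1) → ℤ) (c : Fin (n + 1)) :
    ∑ k, H n c k * (μ - Pi.single c 1 : Fin (n + 1) → ℤ) k = ∑ k, H n c k * μ k - 1 := by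
  simp [mul_sub, sum_sub_distrib, Pi.single_apply, H]

lemma sum_range_ite_mul_sub {K : Type*} [CommRing K] (f : ℕ → K) (v : K) {b N : ℕ}
    (hb : b + 1 ≤ N) :
    ∑ c ∈ range N, (if c ≤ b then v else 1) * (f c - f (c + 1)) =
      v * (f 0 - f (b + 1)) + (f (b + 1) - f N) := by
  induction N, hb using Nat.le_induction with
  | base =>
    rw [sum_congr rfl fun c hc => by rw [if_pos (Nat.lt_succ_iff.mp (mem_range.mp hc))],
      ← mul_sum, sum_range_sub', sub_self, add_zero]
  | succ N hN ih =>
    rw [sum_range_succ, ih, if_neg (by omega)]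
    ring

lemma sum_zpow_H_mul_one_sub {K : Type*} [Field K] {x : K} (hx : x ≠ 0) {n : ℕ}
    (b : Fin (n + 1)) (μ : Fin (n + 1) → ℤ) :
    ∑ c, x ^ ((∑ k, μ k) * H n b c + (∑ k, H n c k * μ k - μ c)) * (1 - x ^ μ c) =
      x ^ (∑ k, H n b k * μ k) * (1 - x ^ ∑ k, μ k) := by
  set P : ℕ → ℤ := fun m => ∑ k : Fin (n + 1), if (k : ℕ) < m then μ k else 0
  have hH : ∀ c : Fin (n + 1), ∑ k, H n c k * μ k = P (c + 1) := fun c =>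
    sum_congr rfl fun k _ => by simp only [H, Fin.le_def]; split_ifs <;> omega
  have hP : ∀ c : Fin (n + 1), P (c + 1) = P c + μ c := fun c => by
    simp only [P, ← Fintype.sum_ite_eq' c μ, ← sum_add_distrib]
    refine sum_congr rfl fun k _ => ?_
    simp only [Fin.ext_iff]
    split_ifs <;> omega
  have hP0 : P 0 = 0 := by simp [P]
  have hPn : P (n + 1) = ∑ k, μ k := sum_congr rfl fun k _ => if_pos k.isLt
  have hterm : ∀ c : Fin (n + 1),
      x ^ ((∑ k, μ k) * H n b c + (∑ k, H n c k * μ k - μ c)) * (1 - x ^ μ c) =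
        (if (c : ℕ) ≤ b then x ^ ∑ k, μ k else 1) * (x ^ P c - x ^ P (c + 1)) := fun c => by
    rw [hH, hP, add_sub_cancel_right, zpow_add₀ hx, zpow_add₀ hx]
    simp only [H, Fin.le_def]
    split_ifs <;> simp only [mul_one, mul_zero, zpow_zero] <;> ring
  rw [sum_congr rfl fun c _ => hterm c, Fin.sum_univ_eq_sum_range
    (fun c => (if c ≤ b then x ^ ∑ k, μ k else 1) * (x ^ P c - x ^ P (c + 1))),
    sum_range_ite_mul_sub _ _ b.isLt, hP0, hPn, hH, zpow_zero]
  ring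

section Tuples

variable {n : ℕ}

def content {j : ℕ} (s : Fin j → Fin (n + 1)) (k : Fin (n + 1)) : ℤ := #{i | s i = k}

def energy {j : ℕ} (p : Fin (j + 1) → Fin (n + 1)) : ℤ :=
  ∑ i : Fin j, ((i : ℤ) + 1) * H n (p i.succ) (p i.castSucc)

lemma content_snoc {j : ℕ} (s : Fin j → Fin (n + 1)) (c : Fin (n + 1)) :
    content (Fin.snoc s c : Fin (j + 1) → Fin (n + 1)) = content s + Pi.single c 1 := by
  ext k
  simp only [content, card_filter, Fin.sum_univ_castSucc, Fin.snoc_castSucc, Fin.snoc_last,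
    Pi.add_apply, Pi.single_apply, eq_comm (a := c)]
  push_cast; rfl

lemma energy_snoc {j : ℕ} (p : Fin (j + 1) → Fin (n + 1)) (b : Fin (n + 1)) :
    energy (Fin.snoc p b : Fin (j + 2) → Fin (n + 1)) =
      energy p + ((j : ℤ) + 1) * H n b (p (Fin.last j)) := by
  rw [energy, Fin.sum_univ_castSucc]
  simp [energy, Fin.succ_castSucc, -Fin.castSucc_succ]

lemma sum_content {j : ℕ} (s : Fin j → Fin (n + 1)) : ∑ k, content s k = j := by
  simp only [content]
  exact_mod_cast (card_eq_sum_card_fiberwise (fun i _ => mem_univ (s i))).symm.trans (by simp)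

lemma g_eq_sum (j : ℕ) (b : Fin (n + 1)) (μ : Fin (n + 1) → ℤ) :
    g n j b μ = ∑ s : Fin j → Fin (n + 1),
      if content s = μ then q ^ energy (Fin.snoc s b : Fin (j + 1) → Fin (n + 1)) else 0 := by
  rw [g, ← sum_filter]
  refine sum_nbij' Fin.init (fun s => Fin.snoc s b) ?_ ?_ ?_ ?_ ?_ <;>
    simp +contextual [content, funext_iff, Fin.init, energy]
  all_goals rintro p rfl hμ
  all_goals first | exact hμ | simp [Fin.snoc_init_self]

lemma g_succ (j : ℕ) (b : Fin (n + 1)) (μ : Fin (n + 1) → ℤ) :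
    g n (j + 1) b μ =
      ∑ c, q ^ (((j : ℤ) + 1) * H n b c) * g n j c (μ - Pi.single c 1) := by
  rw [g_eq_sum, ← (Fin.snocEquiv fun _ => Fin (n + 1)).sum_comp, Fintype.sum_prod_type]
  refine sum_congr rfl fun c _ => ?_
  dsimp only [Fin.snocEquiv, Equiv.coe_fn_mk]
  simp only [g_eq_sum, mul_sum, content_snoc, energy_snoc, Fin.snoc_last,
    eq_sub_iff_add_eq, zpow_add₀ q_ne_zero]
  refine sum_congr rfl fun s _ => ?_
  split_ifs <;> ring

lemma g_eq_zero_of_not_composition {j : ℕ} (b : Fin (n + 1)) {μ : Fin (n + 1) → ℤ}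
    (hμ : ¬((∀ k, 0 ≤ μ k) ∧ ∑ k, μ k = j)) : g n j b μ = 0 := by
  rw [g_eq_sum]
  refine sum_eq_zero fun s _ => if_neg ?_
  rintro rfl
  exact hμ ⟨fun k => Int.natCast_nonneg _, sum_content s⟩

lemma g_zero (b : Fin (n + 1)) (μ : Fin (n + 1) → ℤ) :
    g n 0 b μ = q ^ ((∑ k, μ k * (μ k - 1)) / 2 + ∑ k, H n b k * μ k) * qmult n 0 μ := by
  by_cases hμ : (∀ k, 0 ≤ μ k) ∧ ∑ k, μ k = ((0 : ℕ) : ℤ)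
  · obtain rfl : μ = 0 := funext fun k =>
      (sum_eq_zero_iff_of_nonneg fun k _ => hμ.1 k).1 hμ.2 k (mem_univ k)
    rw [g_eq_sum, Fintype.sum_unique, if_pos (funext fun k => by simp [content])]
    simp [energy, qmult, qfac]
  · rw [g_eq_zero_of_not_composition b hμ, qmult, if_neg hμ, mul_zero]

end Tuples

theorem statement0_general (n : ℕ) (j : ℕ) (b : Fin (n + 1)) (μ : Fin (n + 1) → ℤ) :
    g n j b μ =
      q ^ ((∑ k, μ k * (μ k - 1)) / 2 + ∑ k, H n b k * μ k) * qmult n j μ := by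
  induction j generalizing b μ with
  | zero => exact g_zero b μ
  | succ j ih =>
    by_cases hμ : (∀ k, 0 ≤ μ k) ∧ ∑ k, μ k = ((j + 1 : ℕ) : ℤ)
    swap
    · rw [g_eq_zero_of_not_composition b hμ, qmult, if_neg hμ, mul_zero]
    have hj : ∑ k, μ k = (j : ℤ) + 1 := by exact_mod_cast hμ.2
    apply mul_right_cancel₀ (one_sub_q_zpow_ne_zero (m := (j : ℤ) + 1) (by omega))
    calc g n (j + 1) b μ * (1 - q ^ ((j : ℤ) + 1))
        = ∑ c, q ^ (((j : ℤ) + 1) * H n b c) *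
            q ^ ((∑ k, μ k * (μ k - 1)) / 2 + (∑ k, H n c k * μ k - μ c)) *
            (qmult n j (μ - Pi.single c 1) * (1 - q ^ ((j : ℤ) + 1))) := by
          rw [g_succ, sum_mul]
          refine sum_congr rfl fun c _ => ?_
          rw [ih, sum_mul_sub_one_sub_single_div_two, sum_H_mul_sub_single, sub_add_sub_comm,
            sub_add_cancel, add_sub_assoc]
          ring
      _ = q ^ ((∑ k, μ k * (μ k - 1)) / 2) * qmult n (j + 1) μ * ∑ c,
            q ^ ((∑ k, μ k) * H n b c + (∑ k, H n c k * μ k - μ c)) * (1 - q ^ μ c) := by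
          rw [mul_sum]
          refine sum_congr rfl fun c _ => ?_
          rw [← qmult_succ_mul_one_sub, hj]
          simp only [zpow_add₀ q_ne_zero]
          ring
      _ = _ := by
          rw [sum_zpow_H_mul_one_sub q_ne_zero, hj]
          simp only [zpow_add₀ q_ne_zero]
          ring

/-- the closed `q`-multinomial formula for the unrestricted one-dimensional
sum of the level-1 perfect crystal of type `A_n^{(1)}`. -/
theorem statement0 (n : ℕ) (hn : 1 ≤ n) (j : ℕ) (b : Fin (n + 1)) (μ : Fin (n + 1) → ℤ) :
    g n j b μ =
      q ^ ((∑ k, μ k * (μ k - 1)) / 2 + ∑ k, H n b k * μ k) * qmult n j μ :=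
  statement0_general n j b μ

end
end

section
/- Let n ≥ 1 and let i ∈ {1,…,n}. For every b ∈ B with b ≠ i−1, every integer j ≥ 0 and every μ ∈ ℤ^{n+1}, the unrestricted one-dimensional sum of the level-1 perfect crystal of type A_n^{(1)} satisfies g_j(b, μ) = g_j(b, s_i·μ), where s_i·μ denotes the vector obtained from μ by interchanging the entries μ_{i−1} and μ_i. (This is the case m = 0 of the Weyl-reflection identity for the one-dimensional sums, for a classical index i and an element b with φ_i(b) = 0.) -/
/-
Conditioning on the last letter of a path gives the recursion
`g_{j+1}(b, μ) = ∑_x q^{(j+1) H(b,x)} g_j(x, μ - e_x)`.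
Write `a = i - 1`, `c = i` and `s` for their transposition. For `b ≠ a` the weights `H(b,a)` and
`H(b,c)` agree, so the terms `x = a, c` merge into the pair sum
`G_j(μ) = g_j(c, μ - e_c) + g_j(a, μ - e_a)`, and `s`-invariance of `g_{j+1}(b, ·)` reduces to
that of `g_j(x, ·)` for `x ≠ a` and of `G_j`. Expanding `G_{j+1}` in the same way, with
`H(c,a) = H(c,c) = H(a,a) = 1` and `H(a,c) = 0`, gives
`G_{j+1}(μ) = q^{j+1} (G_j(μ - e_c) + G_j(μ - e_a)) + (1 - q^{j+1}) g_j(c, μ - e_a - e_c) + ⋯`,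
where `s` exchanges the two `G_j` terms and the rest is `s`-invariant termwise. So both
invariances follow by a simultaneous induction on `j`.
-/

open Finset

noncomputable section

/-- The standard basis vector `e_b` of `ℤ^{n+1}`. -/
def e (n : ℕ) (b : Fin (n + 1)) : Fin (n + 1) → ℤ := fun k => if k = b then 1 else 0

namespace OneDimSum

variable {n : ℕ}

def content {m : ℕ} (w : Fin m → Fin (n + 1)) : Fin (n + 1) → ℤ := ∑ i, e n (w i)

def energy {j : ℕ} (p : Fin (j + 1) → Fin (n + 1)) : ℤ :=
  ∑ i : Fin j, ((i : ℤ) + 1) * H n (p i.succ) (p i.castSucc)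

lemma content_apply {m : ℕ} (w : Fin m → Fin (n + 1)) (k : Fin (n + 1)) :
    content w k = #{i | w i = k} := by
  simp [content, e, Finset.sum_apply, Finset.sum_boole, eq_comm]

lemma content_eq_init_add {m : ℕ} (p : Fin (m + 1) → Fin (n + 1)) :
    content p = content (Fin.init p) + e n (p (Fin.last m)) :=
  Fin.sum_univ_castSucc _

lemma energy_snoc {j : ℕ} (p : Fin (j + 1) → Fin (n + 1)) (b : Fin (n + 1)) :
    energy (Fin.snoc p b : Fin (j + 2) → Fin (n + 1)) =
      energy p + (j + 1) * H n b (p (Fin.last j)) := by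
  rw [energy, Fin.sum_univ_castSucc]
  simp only [energy, Fin.snoc_castSucc, Fin.succ_castSucc, Fin.snoc_last, Fin.succ_last,
    Fin.val_castSucc, Fin.val_last]

lemma g_eq_sum (j : ℕ) (b : Fin (n + 1)) (μ : Fin (n + 1) → ℤ) :
    g n j b μ = ∑ p : Fin (j + 1) → Fin (n + 1),
      if p (Fin.last j) = b ∧ content (Fin.init p) = μ then q ^ energy p else 0 := by
  simp only [g, Finset.sum_filter, funext_iff, content_apply, energy]
  rfl

lemma g_zero (b : Fin (n + 1)) (μ : Fin (n + 1) → ℤ) : g n 0 b μ = if μ = 0 then 1 else 0 := by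
  rw [g_eq_sum, ← (Equiv.funUnique (Fin 1) (Fin (n + 1))).symm.sum_comp]
  by_cases hμ : μ = 0
  · subst hμ
    simp [content, energy]
  · simp [content, Ne.symm hμ, hμ]

lemma g_succ (j : ℕ) (b : Fin (n + 1)) (μ : Fin (n + 1) → ℤ) :
    g n (j + 1) b μ = ∑ x, q ^ ((j + 1 : ℤ) * H n b x) * g n j x (μ - e n x) := by
  have hq : q ≠ 0 := RatFunc.X_ne_zero
  calc g n (j + 1) b μ
      = ∑ p : Fin (j + 1) → Fin (n + 1),
          if content p = μ then q ^ energy (Fin.snoc p b : Fin (j + 2) → Fin (n + 1)) else 0 := by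
        rw [g_eq_sum, ← (Fin.snocEquiv _).sum_comp, Fintype.sum_prod_type,
          Fintype.sum_eq_single b]
        · simp [Fin.snocEquiv]
        · intro y hy
          simp [Fin.snocEquiv, hy]
    _ = ∑ p : Fin (j + 1) → Fin (n + 1), ∑ x, q ^ ((j + 1 : ℤ) * H n b x) *
          if p (Fin.last j) = x ∧ content (Fin.init p) = μ - e n x then q ^ energy p else 0 := by
        refine Finset.sum_congr rfl fun p _ => ?_
        simp only [mul_ite, mul_zero, ite_and, Finset.sum_ite_eq, Finset.mem_univ, if_true]
        rw [content_eq_init_add, energy_snoc, zpow_add₀ hq, mul_comm]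
        simp only [eq_sub_iff_add_eq]
    _ = ∑ x, q ^ ((j + 1 : ℤ) * H n b x) * g n j x (μ - e n x) := by
        simp_rw [g_eq_sum, Finset.mul_sum]
        exact Finset.sum_comm

lemma g_zero_comp_equiv (b : Fin (n + 1)) (μ : Fin (n + 1) → ℤ) (σ : Equiv.Perm (Fin (n + 1))) :
    g n 0 b (μ ∘ σ) = g n 0 b μ := by
  have : μ ∘ σ = 0 ↔ μ = 0 := by
    rw [← Pi.zero_comp σ]
    exact σ.surjective.injective_comp_right.eq_iff
  simp only [g_zero, this]

lemma sub_e_comp_swap (μ : Fin (n + 1) → ℤ) (x y z : Fin (n + 1)) :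
    (μ - e n x) ∘ Equiv.swap y z = μ ∘ Equiv.swap y z - e n (Equiv.swap y z x) := by
  funext k
  simp [e, Equiv.swap_apply_eq_iff]

lemma sub_e_sub_e_comp_swap (μ : Fin (n + 1) → ℤ) (y z : Fin (n + 1)) :
    (μ - e n y - e n z) ∘ Equiv.swap y z = μ ∘ Equiv.swap y z - e n y - e n z := by
  rw [sub_e_comp_swap, sub_e_comp_swap, Equiv.swap_apply_left, Equiv.swap_apply_right,
    sub_right_comm]

lemma H_self (x : Fin (n + 1)) : H n x x = 1 := if_pos le_rfl

section Reflection

variable (a : Fin n)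

lemma H_succ_castSucc : H n a.succ a.castSucc = 1 := if_pos (Fin.castSucc_le_succ a)

lemma H_castSucc_succ : H n a.castSucc a.succ = 0 := if_neg Fin.castSucc_lt_succ.not_ge

lemma H_apply_castSucc_of_ne {x : Fin (n + 1)} (hx : x ≠ a.castSucc) :
    H n x a.castSucc = H n x a.succ := by
  simp only [H, Fin.le_def, Fin.val_succ, Fin.val_castSucc]
  have := Fin.val_ne_of_ne hx
  simp only [Fin.val_castSucc] at this
  split_ifs <;> omega

lemma H_castSucc_apply_of_ne {x : Fin (n + 1)} (hx : x ≠ a.succ) :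
    H n a.castSucc x = H n a.succ x := by
  simp only [H, Fin.le_def, Fin.val_succ, Fin.val_castSucc]
  have := Fin.val_ne_of_ne hx
  simp only [Fin.val_succ] at this
  split_ifs <;> omega

def gPair (j : ℕ) (μ : Fin (n + 1) → ℤ) : RatFunc ℚ :=
  g n j a.succ (μ - e n a.succ) + g n j a.castSucc (μ - e n a.castSucc)

lemma g_succ_of_ne (j : ℕ) {b : Fin (n + 1)} (hb : b ≠ a.castSucc) (μ : Fin (n + 1) → ℤ) :
    g n (j + 1) b μ = q ^ ((j + 1 : ℤ) * H n b a.succ) * gPair a j μ +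
      ∑ x ∈ {a.castSucc, a.succ}ᶜ, q ^ ((j + 1 : ℤ) * H n b x) * g n j x (μ - e n x) := by
  rw [g_succ, ← Finset.sum_add_sum_compl {a.castSucc, a.succ},
    Finset.sum_pair Fin.castSucc_lt_succ.ne, gPair, H_apply_castSucc_of_ne a hb]
  ring

lemma gPair_succ (j : ℕ) (μ : Fin (n + 1) → ℤ) :
    gPair a (j + 1) μ =
      q ^ (j + 1 : ℤ) * (gPair a j (μ - e n a.succ) + gPair a j (μ - e n a.castSucc)) +
        (1 - q ^ (j + 1 : ℤ)) * g n j a.succ (μ - e n a.castSucc - e n a.succ) +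
      ∑ x ∈ {a.castSucc, a.succ}ᶜ, q ^ ((j + 1 : ℤ) * H n a.castSucc x) *
        (g n j x (μ - e n a.succ - e n x) + g n j x (μ - e n a.castSucc - e n x)) := by
  rw [gPair, g_succ, g_succ, ← Finset.sum_add_distrib,
    ← Finset.sum_add_sum_compl {a.castSucc, a.succ}, Finset.sum_pair Fin.castSucc_lt_succ.ne]
  congr 1
  · simp only [gPair, H_succ_castSucc, H_castSucc_succ, H_self, mul_one, mul_zero, zpow_zero]
    ring
  · refine Finset.sum_congr rfl fun x hx => ?_
    have hxc : x ≠ a.succ := by simp_all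
    rw [H_castSucc_apply_of_ne a hxc]
    ring

lemma g_comp_swap_and_gPair_comp_swap (j : ℕ) :
    (∀ b ≠ a.castSucc, ∀ μ, g n j b (μ ∘ Equiv.swap a.castSucc a.succ) = g n j b μ) ∧
      ∀ μ, gPair a j (μ ∘ Equiv.swap a.castSucc a.succ) = gPair a j μ := by
  have hne : a.castSucc ≠ a.succ := Fin.castSucc_lt_succ.ne
  induction j with
  | zero =>
    refine ⟨fun b _ μ => g_zero_comp_equiv b μ _, fun μ => ?_⟩
    have hc := g_zero_comp_equiv a.succ (μ - e n a.castSucc) (Equiv.swap a.castSucc a.succ)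
    have ha := g_zero_comp_equiv a.castSucc (μ - e n a.succ) (Equiv.swap a.castSucc a.succ)
    simp only [sub_e_comp_swap, Equiv.swap_apply_left, Equiv.swap_apply_right] at hc ha
    simp only [gPair, hc, ha, g_zero]
    ac_rfl
  | succ j ih =>
    obtain ⟨hg, hgPair⟩ := ih
    have hg_off {x : Fin (n + 1)} (hx : x ∈ ({a.castSucc, a.succ} : Finset _)ᶜ) (μ) :
        g n j x (μ ∘ Equiv.swap a.castSucc a.succ - e n x) = g n j x (μ - e n x) := by
      simp only [Finset.mem_compl, Finset.mem_insert, Finset.mem_singleton, not_or] at hx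
      rw [← hg x hx.1 (μ - e n x), sub_e_comp_swap, Equiv.swap_apply_of_ne_of_ne hx.1 hx.2]
    refine ⟨fun b hb μ => ?_, fun μ => ?_⟩
    · rw [g_succ_of_ne a j hb, g_succ_of_ne a j hb, hgPair]
      congr 1
      exact Finset.sum_congr rfl fun x hx => by rw [hg_off hx]
    · have hsucc := hgPair (μ - e n a.castSucc)
      have hcastSucc := hgPair (μ - e n a.succ)
      simp only [sub_e_comp_swap, Equiv.swap_apply_left, Equiv.swap_apply_right] at hsucc hcastSucc
      have hpair := hg a.succ hne.symm (μ - e n a.castSucc - e n a.succ)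
      rw [sub_e_sub_e_comp_swap] at hpair
      rw [gPair_succ, gPair_succ, hsucc, hcastSucc, hpair,
        add_comm (gPair a j (μ - e n a.castSucc))]
      congr 1
      refine Finset.sum_congr rfl fun x hx => ?_
      have hsucc_off := hg_off hx (μ - e n a.castSucc)
      have hcastSucc_off := hg_off hx (μ - e n a.succ)
      simp only [sub_e_comp_swap, Equiv.swap_apply_left, Equiv.swap_apply_right]
        at hsucc_off hcastSucc_off
      rw [hsucc_off, hcastSucc_off, add_comm (g n j x (μ - e n a.castSucc - e n x))]

theorem g_comp_swap (j : ℕ) {b : Fin (n + 1)} (hb : b ≠ a.castSucc) (μ : Fin (n + 1) → ℤ) :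
    g n j b (μ ∘ Equiv.swap a.castSucc a.succ) = g n j b μ :=
  (g_comp_swap_and_gPair_comp_swap a j).1 b hb μ

end Reflection

end OneDimSum

/-- the `m = 0` case of the Weyl-reflection identity for a classical index
`i ∈ {1,…,n}` and `b ≠ i-1` (so that `φ_i(b) = 0`): `g_j(b,μ) = g_j(b, s_i·μ)`, where
`s_i` interchanges the entries `μ_{i-1}` and `μ_i`. -/
theorem statement7 (n : ℕ) (i : ℕ) (hi1 : 1 ≤ i) (hin : i ≤ n)
    (b : Fin (n + 1)) (hb : (b : ℕ) ≠ i - 1) (j : ℕ) (μ : Fin (n + 1) → ℤ) :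
    g n j b μ =
      g n j b (fun k =>
        if (k : ℕ) = i - 1 then μ ⟨i, by omega⟩
        else if (k : ℕ) = i then μ ⟨i - 1, by omega⟩
        else μ k) := by
  set a : Fin n := ⟨i - 1, by omega⟩
  have hswap : (fun k : Fin (n + 1) =>
      if (k : ℕ) = i - 1 then μ ⟨i, by omega⟩
      else if (k : ℕ) = i then μ ⟨i - 1, by omega⟩
      else μ k) = μ ∘ Equiv.swap a.castSucc a.succ := by
    funext k
    have hsucc : a.succ = ⟨i, by omega⟩ := Fin.ext (by simp [a]; omega)
    simp only [Function.comp_apply, Equiv.swap_apply_def, apply_ite μ, Fin.ext_iff, hsucc]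
    rfl
  have hba : b ≠ a.castSucc := fun h => hb (by simp [h, a])
  rw [hswap, OneDimSum.g_comp_swap a j hba]

end
end

section
/- Let n ≥ 1, l ≥ 1, and fix L = (L_0,…,L_n) ∈ ℤ_{≥0}^{n+1} with L_0+⋯+L_n = l (a dominant affine weight of level l for A_n^{(1)}). Call γ ∈ B_l admissible (with respect to L) if γ_i ≤ L_i for all i ∈ {0,…,n}. Then there exists a set S of pairs (γ', i) with γ' ∈ B_l, i ∈ {0,…,n} and γ'_i = L_i + 1, such that the string sets {f_i^t(γ') : 0 ≤ t ≤ φ_i(γ')} for (γ', i) ∈ S are pairwise disjoint and their union equals the set {γ ∈ B_l : γ is not admissible}. (This is the string-decomposition property of non-admissible elements, proved by the authors for the l-fold symmetric tensor perfect crystal of U_q(A_n^{(1)}).) -/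
open Finset

/-! The level-`l` perfect crystal `B_l` of `U_q(A_n^{(1)})` given by `l`-fold symmetric
tensors: its elements are content vectors `γ ∈ ℤ_{≥0}^{n+1}` with `Σ_k γ_k = l`.
For `i ∈ {0,…,n}` one has `ε_i(γ) = γ_i`, `φ_i(γ) = γ_{i⊖1}` and, for `0 ≤ t ≤ φ_i(γ)`,
`f_i^t(γ) = γ - t·e_{i⊖1} + t·e_i`, where `i⊖1 = i-1 mod (n+1)` (realized by the cyclic
subtraction `i - 1` of `Fin (n+1)`). -/

/-- `f_i^t(γ')` for a pair `pr = (γ', i)`:  subtract `t` from the entry at `i⊖1` and add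
`t` to the entry at `i`. -/
def fstep {n : ℕ} (pr : (Fin (n + 1) → ℕ) × Fin (n + 1)) (t : ℕ) : Fin (n + 1) → ℕ :=
  fun k => if k = pr.2 - 1 then pr.1 k - t else if k = pr.2 then pr.1 k + t else pr.1 k

/-! Put `d_k = γ_k - L_k`, so that `Σ d_k = 0`, and let `p` be a potential on `ℤ/(n+1)`:
`p_i - p_{i-1} = d_i`. Call crest the set of `i` at which `p` is maximal but `p_{i-1}` is not;
it is nonempty as soon as some `d_i > 0`, and `d_i > 0` on it. Moving along the `i`-string of
`γ` for a crest index `i` while keeping `γ_i > L_i` changes `p` (up to a constant) only at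
`i - 1`, which stays below the maximum, so the crest does not move. Hence a canonical crest
index `c(γ)` is constant along the part of the `c(γ)`-string where `γ_c > L_c`, and the
non-admissible elements are partitioned by the strings starting at the heads `γ_c = L_c + 1`. -/

namespace Fin

variable {n : ℕ}

theorem sub_one_ne_self (hn : 1 ≤ n) (i : Fin (n + 1)) : i - 1 ≠ i := fun h => by
  have := Fin.one_eq_zero_iff.1 (sub_eq_self.1 h)
  omega

open Fin.NatCast in
theorem forall_of_imp_sub_one {P : Fin (n + 1) → Prop} {i₀ : Fin (n + 1)} (h₀ : P i₀)
    (h : ∀ i, P i → P (i - 1)) (j : Fin (n + 1)) : P j := by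
  have key : ∀ k : ℕ, P (i₀ - k) := by
    intro k
    induction k with
    | zero => simpa using h₀
    | succ k ih => simpa [sub_sub] using h _ ih
  simpa using key (i₀ - j).val

theorem Iic_eq_insert_Iic_sub_one {i : Fin (n + 1)} (hi : i ≠ 0) :
    Iic i = insert i (Iic (i - 1)) := by
  have hv : (i - 1).val = i.val - 1 := by rw [coe_sub_one, if_neg hi]
  have : i.val ≠ 0 := val_ne_zero_iff.2 hi
  ext k
  simp only [mem_Iic, mem_insert, le_iff_val_le_val, Fin.ext_iff, hv]
  omega

theorem Iic_zero_sub_one : Iic (0 - 1 : Fin (n + 1)) = univ := by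
  ext k
  simp only [mem_Iic, mem_univ, iff_true, le_iff_val_le_val, coe_sub_one, ite_true]
  omega

end Fin

section Maximizers

variable {ι α : Type*} [Fintype ι] [LinearOrder α]

def maximizers (p : ι → α) : Finset ι := univ.filter fun i => ∀ j, p j ≤ p i

theorem mem_maximizers {p : ι → α} {i : ι} : i ∈ maximizers p ↔ ∀ j, p j ≤ p i := by
  simp [maximizers]

theorem maximizers_nonempty [Nonempty ι] (p : ι → α) : (maximizers p).Nonempty := by
  obtain ⟨i, hi⟩ := Finite.exists_max p
  exact ⟨i, mem_maximizers.2 hi⟩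

theorem mem_maximizers_iff_of_mem {p : ι → α} {c i : ι} (hc : c ∈ maximizers p) :
    i ∈ maximizers p ↔ p c ≤ p i := by
  rw [mem_maximizers] at hc ⊢
  exact ⟨fun h => h c, fun h j => (hc j).trans h⟩

theorem maximizers_update [DecidableEq ι] {p : ι → α} {c k : ι} {v : α} (hc : c ∈ maximizers p)
    (hk : k ∉ maximizers p) (hv : v < p c) :
    maximizers (Function.update p k v) = maximizers p := by
  have hck : c ≠ k := fun h => hk (h ▸ hc)
  have hpk : p k < p c := not_le.1 ((mem_maximizers_iff_of_mem hc).not.1 hk)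
  have hc' : c ∈ maximizers (Function.update p k v) := by
    refine mem_maximizers.2 fun j => ?_
    rcases eq_or_ne j k with rfl | hj
    · simpa [hck] using hv.le
    · simpa [hj, hck] using mem_maximizers.1 hc j
  ext i
  rw [mem_maximizers_iff_of_mem hc', mem_maximizers_iff_of_mem hc]
  rcases eq_or_ne i k with rfl | hi
  · simp only [Function.update_self, Function.update_of_ne hck]
    exact iff_of_false (not_le.2 hv) (not_le.2 hpk)
  · simp [hck, hi]

end Maximizers

section Cyclic

variable {n : ℕ}

def runStarts (A : Finset (Fin (n + 1))) : Finset (Fin (n + 1)) := A.filter fun i => i - 1 ∉ A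

theorem runStarts_nonempty {A : Finset (Fin (n + 1))} (hne : A.Nonempty) (hA : A ≠ univ) :
    (runStarts A).Nonempty := by
  by_contra h
  obtain ⟨i₀, hi₀⟩ := hne
  refine hA (eq_univ_of_forall (Fin.forall_of_imp_sub_one hi₀ fun i hi => ?_))
  by_contra hi'
  exact h ⟨i, mem_filter.2 ⟨hi, hi'⟩⟩

theorem maximizers_eq_of_sub_sub_one_eq {p q : Fin (n + 1) → ℤ}
    (h : ∀ i, p i - p (i - 1) = q i - q (i - 1)) : maximizers p = maximizers q := by
  have hconst : ∀ i, p i - q i = p 0 - q 0 :=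
    Fin.forall_of_imp_sub_one (P := fun i => p i - q i = p 0 - q 0) rfl
      fun i hi => by linarith [h i]
  ext i
  simp only [mem_maximizers]
  exact forall_congr' fun j => by constructor <;> intro <;> linarith [hconst i, hconst j]

def potential (d : Fin (n + 1) → ℤ) (i : Fin (n + 1)) : ℤ := ∑ k ∈ Iic i, d k

theorem potential_sub_potential_sub_one {d : Fin (n + 1) → ℤ} (hd : ∑ i, d i = 0)
    (i : Fin (n + 1)) : potential d i - potential d (i - 1) = d i := by
  by_cases hi : i = 0
  · subst hi
    have h0 : Iic (0 : Fin (n + 1)) = {0} := by ext; simp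
    rw [potential, potential, Fin.Iic_zero_sub_one, hd, h0, sum_singleton, sub_zero]
  · rw [potential, potential, Fin.Iic_eq_insert_Iic_sub_one hi, sum_insert, add_sub_cancel_right]
    simp only [mem_Iic, Fin.le_iff_val_le_val, Fin.coe_sub_one, if_neg hi]
    have : i.val ≠ 0 := Fin.val_ne_zero_iff.2 hi
    omega

def crest (d : Fin (n + 1) → ℤ) : Finset (Fin (n + 1)) := runStarts (maximizers (potential d))

theorem crest_nonempty {d : Fin (n + 1) → ℤ} (hd : ∑ i, d i = 0) (h : ∃ i, 0 < d i) :
    (crest d).Nonempty := by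
  refine runStarts_nonempty (maximizers_nonempty _) fun hall => ?_
  obtain ⟨i, hi⟩ := h
  have hmax : ∀ j, potential d j ≤ potential d (i - 1) :=
    mem_maximizers.1 (hall ▸ mem_univ (i - 1))
  linarith [hmax i, potential_sub_potential_sub_one hd i]

theorem pos_of_mem_crest {d : Fin (n + 1) → ℤ} (hd : ∑ i, d i = 0) {c : Fin (n + 1)}
    (hc : c ∈ crest d) : 0 < d c := by
  obtain ⟨hcmax, hprev⟩ := mem_filter.1 hc
  rw [mem_maximizers_iff_of_mem hcmax, not_le] at hprev
  linarith [potential_sub_potential_sub_one hd c]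

theorem crest_eq_of_eq_off_pair (hn : 1 ≤ n) {d d' : Fin (n + 1) → ℤ} (hd : ∑ i, d i = 0)
    (hd' : ∑ i, d' i = 0) {c : Fin (n + 1)} (hc : c ∈ crest d)
    (hoff : ∀ k, k ≠ c - 1 → k ≠ c → d' k = d k)
    (hpair : d' (c - 1) + d' c = d (c - 1) + d c) (hpos : 0 < d' c) :
    crest d' = crest d := by
  -- Up to an additive constant, moving along the `c`-string changes the potential only at
  -- `c - 1`, where it stays below the maximum.
  set p := potential d
  set q := Function.update p (c - 1) (p c - d' c)
  have hne := Fin.sub_one_ne_self hn c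
  have hinc := potential_sub_potential_sub_one hd
  have hq : ∀ i, q i - q (i - 1) = d' i := by
    intro i
    rcases eq_or_ne i c with rfl | hic
    · simp [q, hne.symm]
    rcases eq_or_ne i (c - 1) with rfl | hic'
    · simp only [q, Function.update_self, Function.update_of_ne (Fin.sub_one_ne_self hn _)]
      linarith [hinc c, hinc (c - 1)]
    · have : i - 1 ≠ c - 1 := fun h => hic (sub_left_injective h)
      simp only [q, Function.update_of_ne hic', Function.update_of_ne this, hoff i hic' hic]
      exact hinc i
  obtain ⟨hcmax, hprev⟩ := mem_filter.1 hc
  have hpot : maximizers (potential d') = maximizers q :=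
    maximizers_eq_of_sub_sub_one_eq fun i => by rw [potential_sub_potential_sub_one hd', hq]
  rw [crest, hpot, maximizers_update hcmax hprev (by linarith)]
  rfl

def SameString (i : Fin (n + 1)) (γ δ : Fin (n + 1) → ℕ) : Prop :=
  (∀ k, k ≠ i - 1 → k ≠ i → δ k = γ k) ∧ δ (i - 1) + δ i = γ (i - 1) + γ i

theorem SameString.trans {i : Fin (n + 1)} {γ δ ε : Fin (n + 1) → ℕ} (h₁ : SameString i γ δ)
    (h₂ : SameString i δ ε) : SameString i γ ε :=
  ⟨fun k hk hk' => (h₂.1 k hk hk').trans (h₁.1 k hk hk'), h₂.2.trans h₁.2⟩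

theorem SameString.sum_eq (hn : 1 ≤ n) {i : Fin (n + 1)} {γ δ : Fin (n + 1) → ℕ}
    (h : SameString i γ δ) : ∑ k, δ k = ∑ k, γ k := by
  have hi : i - 1 ∈ univ.erase i := mem_erase.2 ⟨Fin.sub_one_ne_self hn i, mem_univ _⟩
  have split : ∀ f : Fin (n + 1) → ℕ,
      ∑ k, f k = f (i - 1) + f i + ∑ k ∈ (univ.erase i).erase (i - 1), f k := fun f => by
    rw [← add_sum_erase _ f (mem_univ i), ← add_sum_erase _ f hi]
    ring
  rw [split δ, split γ, h.2]
  congr 1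
  refine sum_congr rfl fun k hk => ?_
  simp only [mem_erase] at hk
  exact h.1 k hk.1 hk.2.1

theorem sameString_fstep (hn : 1 ≤ n) {i : Fin (n + 1)} {γ : Fin (n + 1) → ℕ} {t : ℕ}
    (ht : t ≤ γ (i - 1)) : SameString i γ (fstep (γ, i) t) := by
  have hi := Fin.sub_one_ne_self hn i
  refine ⟨fun k hk hk' => by simp [fstep, hk, hk'], ?_⟩
  simp only [fstep, if_true, if_neg hi.symm]
  omega

def stringPoint (i : Fin (n + 1)) (γ : Fin (n + 1) → ℕ) (a : ℕ) : Fin (n + 1) → ℕ :=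
  fun k => if k = i - 1 then γ (i - 1) + γ i - a else if k = i then a else γ k

theorem stringPoint_apply_self (hn : 1 ≤ n) (i : Fin (n + 1)) (γ : Fin (n + 1) → ℕ) (a : ℕ) :
    stringPoint i γ a i = a := by
  simp [stringPoint, (Fin.sub_one_ne_self hn i).symm]

theorem stringPoint_apply_sub_one (i : Fin (n + 1)) (γ : Fin (n + 1) → ℕ) (a : ℕ) :
    stringPoint i γ a (i - 1) = γ (i - 1) + γ i - a := by
  simp [stringPoint]

theorem sameString_stringPoint (hn : 1 ≤ n) {i : Fin (n + 1)} {γ : Fin (n + 1) → ℕ} {a : ℕ}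
    (ha : a ≤ γ (i - 1) + γ i) : SameString i γ (stringPoint i γ a) := by
  refine ⟨fun k hk hk' => by simp [stringPoint, hk, hk'], ?_⟩
  rw [stringPoint_apply_self hn, stringPoint_apply_sub_one]
  omega

theorem SameString.stringPoint_eq {i : Fin (n + 1)} {γ δ : Fin (n + 1) → ℕ}
    (h : SameString i γ δ) (a : ℕ) : stringPoint i δ a = stringPoint i γ a := by
  funext k
  simp only [stringPoint, h.2]
  split_ifs with hk hk' <;> first | rfl | exact h.1 k hk hk'

theorem fstep_stringPoint (hn : 1 ≤ n) {i : Fin (n + 1)} {γ : Fin (n + 1) → ℕ} {a : ℕ}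
    (ha : a ≤ γ i) : fstep (stringPoint i γ a, i) (γ i - a) = γ := by
  have hi := Fin.sub_one_ne_self hn i
  funext k
  simp only [fstep, stringPoint]
  split_ifs <;> subst_vars <;> omega

def excess (L γ : Fin (n + 1) → ℕ) (k : Fin (n + 1)) : ℤ := (γ k : ℤ) - L k

theorem sum_excess {L γ : Fin (n + 1) → ℕ} (h : ∑ k, γ k = ∑ k, L k) : ∑ k, excess L γ k = 0 := by
  simp only [excess, sum_sub_distrib, ← Nat.cast_sum, h, sub_self]

-- The fallback `0` never occurs for non-admissible `γ` (`NonAdmissible.crest_nonempty`).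
def stringIndex (L γ : Fin (n + 1) → ℕ) : Fin (n + 1) :=
  if h : (crest (excess L γ)).Nonempty then (crest (excess L γ)).min' h else 0

theorem stringIndex_mem {L γ : Fin (n + 1) → ℕ} (h : (crest (excess L γ)).Nonempty) :
    stringIndex L γ ∈ crest (excess L γ) := by
  rw [stringIndex, dif_pos h]
  exact min'_mem _ _

theorem stringIndex_congr {L γ δ : Fin (n + 1) → ℕ} (h : crest (excess L δ) = crest (excess L γ)) :
    stringIndex L δ = stringIndex L γ := by
  unfold stringIndex
  rw [h]

def stringHead (L γ : Fin (n + 1) → ℕ) : Fin (n + 1) → ℕ :=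
  stringPoint (stringIndex L γ) γ (L (stringIndex L γ) + 1)

def NonAdmissible (l : ℕ) (L γ : Fin (n + 1) → ℕ) : Prop := (∑ k, γ k = l) ∧ ∃ i, L i < γ i

theorem finite_setOf_nonAdmissible (l : ℕ) (L : Fin (n + 1) → ℕ) :
    {γ | NonAdmissible l L γ}.Finite :=
  (Set.finite_Iic fun _ => l).subset fun γ hγ k =>
    hγ.1 ▸ single_le_sum (fun i _ => Nat.zero_le (γ i)) (mem_univ k)

theorem NonAdmissible.crest_nonempty {l : ℕ} {L γ : Fin (n + 1) → ℕ} (hL : ∑ k, L k = l)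
    (hγ : NonAdmissible l L γ) : (crest (excess L γ)).Nonempty := by
  obtain ⟨hsum, i, hi⟩ := hγ
  exact _root_.crest_nonempty (sum_excess (hsum.trans hL.symm)) ⟨i, by simp [excess]; omega⟩

theorem NonAdmissible.lt_stringIndex {l : ℕ} {L γ : Fin (n + 1) → ℕ} (hL : ∑ k, L k = l)
    (hγ : NonAdmissible l L γ) : L (stringIndex L γ) < γ (stringIndex L γ) := by
  have := pos_of_mem_crest (sum_excess (hγ.1.trans hL.symm))
    (stringIndex_mem (hγ.crest_nonempty hL))
  simp only [excess] at this
  omega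

theorem NonAdmissible.sameString_stringHead (hn : 1 ≤ n) {l : ℕ} {L γ : Fin (n + 1) → ℕ}
    (hL : ∑ k, L k = l) (hγ : NonAdmissible l L γ) :
    SameString (stringIndex L γ) γ (stringHead L γ) :=
  sameString_stringPoint hn (by have := hγ.lt_stringIndex hL; omega)

theorem NonAdmissible.stringIndex_eq (hn : 1 ≤ n) {l : ℕ} {L γ δ : Fin (n + 1) → ℕ}
    (hL : ∑ k, L k = l) (hγ : NonAdmissible l L γ) (hs : SameString (stringIndex L γ) γ δ)
    (hδ : L (stringIndex L γ) < δ (stringIndex L γ)) : stringIndex L δ = stringIndex L γ := by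
  have hγsum := hγ.1.trans hL.symm
  refine stringIndex_congr (crest_eq_of_eq_off_pair hn (sum_excess hγsum)
    (sum_excess ((hs.sum_eq hn).trans hγsum)) (stringIndex_mem (hγ.crest_nonempty hL))
    (fun k hk hk' => by simp only [excess, hs.1 k hk hk']) ?_ (by simp only [excess]; omega))
  have := hs.2
  simp only [excess]
  omega

theorem NonAdmissible.fstep_stringHead (hn : 1 ≤ n) {l : ℕ} {L γ : Fin (n + 1) → ℕ}
    (hL : ∑ k, L k = l) (hγ : NonAdmissible l L γ) {u : ℕ}
    (hu : u ≤ stringHead L γ (stringIndex L γ - 1)) :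
    NonAdmissible l L (fstep (stringHead L γ, stringIndex L γ) u) ∧
      stringIndex L (fstep (stringHead L γ, stringIndex L γ) u) = stringIndex L γ ∧
      stringHead L (fstep (stringHead L γ, stringIndex L γ) u) = stringHead L γ := by
  set c := stringIndex L γ
  set δ := fstep (stringHead L γ, c) u
  have hs : SameString c γ δ := (hγ.sameString_stringHead hn hL).trans (sameString_fstep hn hu)
  have hδc : δ c = L c + 1 + u := by
    simp [δ, fstep, (Fin.sub_one_ne_self hn c).symm, stringHead, stringPoint_apply_self hn, c]
  have hidx : stringIndex L δ = c := hγ.stringIndex_eq hn hL hs (show L c < δ c by omega)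
  refine ⟨⟨(hs.sum_eq hn).trans hγ.1, c, by omega⟩, hidx, ?_⟩
  rw [stringHead, hidx]
  exact hs.stringPoint_eq _

end Cyclic

theorem statement14_general (n l : ℕ) (hn : 1 ≤ n)
    (L : Fin (n + 1) → ℕ) (hL : ∑ k, L k = l) :
    ∃ S : Finset ((Fin (n + 1) → ℕ) × Fin (n + 1)),
      (∀ pr ∈ S, (∑ k, pr.1 k = l) ∧ pr.1 pr.2 = L pr.2 + 1) ∧
      (∀ pr ∈ S, ∀ pr' ∈ S, pr ≠ pr' →
        ∀ t ≤ pr.1 (pr.2 - 1), ∀ u ≤ pr'.1 (pr'.2 - 1), fstep pr t ≠ fstep pr' u) ∧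
      (∀ γ : Fin (n + 1) → ℕ,
        ((∑ k, γ k = l) ∧ ∃ i, L i < γ i) ↔
          ∃ pr ∈ S, ∃ t ≤ pr.1 (pr.2 - 1), γ = fstep pr t) := by
  classical
  let N := (finite_setOf_nonAdmissible l L).toFinset
  refine ⟨N.image fun γ => (stringHead L γ, stringIndex L γ), ?_, ?_, fun γ => ⟨fun hγ => ?_, ?_⟩⟩
  · simp only [N, mem_image, Set.Finite.mem_toFinset]
    rintro _ ⟨γ, hγ, rfl⟩
    exact ⟨((hγ.sameString_stringHead hn hL).sum_eq hn).trans hγ.1, stringPoint_apply_self hn ..⟩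
  · simp only [N, mem_image, Set.Finite.mem_toFinset]
    rintro _ ⟨γ₁, hγ₁, rfl⟩ _ ⟨γ₂, hγ₂, rfl⟩ hne t ht u hu heq
    obtain ⟨-, hi₁, hh₁⟩ := hγ₁.fstep_stringHead hn hL ht
    obtain ⟨-, hi₂, hh₂⟩ := hγ₂.fstep_stringHead hn hL hu
    rw [heq] at hi₁ hh₁
    exact hne (by rw [← hi₁, ← hh₁, hi₂, hh₂])
  · have hc := NonAdmissible.lt_stringIndex hL hγ
    refine ⟨_, mem_image_of_mem _ ((Set.Finite.mem_toFinset _).2 hγ),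
      γ (stringIndex L γ) - (L (stringIndex L γ) + 1), ?_, (fstep_stringPoint hn hc).symm⟩
    simp only [stringHead, stringPoint_apply_sub_one]
    omega
  · simp only [N, mem_image, Set.Finite.mem_toFinset]
    rintro ⟨_, ⟨γ, hγ, rfl⟩, t, ht, rfl⟩
    exact (hγ.fstep_stringHead hn hL ht).1

/-- the string-decomposition property of non-admissible elements of the
`l`-fold symmetric tensor perfect crystal of `U_q(A_n^{(1)})`: given a dominant affine
weight `L` of level `l`, there is a set `S` of pairs `(γ', i)` with `γ' ∈ B_l` and
`γ'_i = L_i + 1` whose strings `{f_i^t(γ') : 0 ≤ t ≤ φ_i(γ')}` are pairwise disjoint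
with union the set of non-admissible elements `{γ ∈ B_l : ∃ i, γ_i > L_i}`. -/
theorem statement14 (n l : ℕ) (hn : 1 ≤ n) (hl : 1 ≤ l)
    (L : Fin (n + 1) → ℕ) (hL : ∑ k, L k = l) :
    ∃ S : Finset ((Fin (n + 1) → ℕ) × Fin (n + 1)),
      (∀ pr ∈ S, (∑ k, pr.1 k = l) ∧ pr.1 pr.2 = L pr.2 + 1) ∧
      (∀ pr ∈ S, ∀ pr' ∈ S, pr ≠ pr' →
        ∀ t ≤ pr.1 (pr.2 - 1), ∀ u ≤ pr'.1 (pr'.2 - 1), fstep pr t ≠ fstep pr' u) ∧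
      (∀ γ : Fin (n + 1) → ℕ,
        ((∑ k, γ k = l) ∧ ∃ i, L i < γ i) ↔
          ∃ pr ∈ S, ∃ t ≤ pr.1 (pr.2 - 1), γ = fstep pr t) :=
  statement14_general n l hn L hL
end
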